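/- Define f₁, f₂ : ℝ → ℝ by f₁(x) = |x − 1| and f₂(x) = |x − 2| / 2. Let i = −1 and j = 1. Then j lies on the segment from i to the position 2 of agent 2, i.e. |i − j| + |j − 2| = |i − 2|, and f₂(i) ≤ f₁(i), yet f₂(j) > f₁(j). Hence the implication 'd(i,c) ≤ d(i,b) and j on a shortest path from i to c imply d(j,c) ≤ d(j,b)', which holds for a common metric (equal agent speeds), fails for the speed-weighted travel times f₁ and f₂. -/
import Mathlib


noncomputable def f₁ : ℝ → ℝ := fun x => |x - 1|
noncomputable def f₂ : ℝ → ℝ := fun x => |x - 2| / 2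

/-- With `i = -1` and `j = 1`: `j` lies on the segment from `i` to the position `2`
of agent 2, and `f₂ i ≤ f₁ i`, yet `f₂ j > f₁ j` — the geodesic-monotonicity step of
Theorem 1 fails for speed-weighted travel times. -/
theorem heterogeneous_speed_counterexample :
    |(-1 : ℝ) - 1| + |(1 : ℝ) - 2| = |(-1 : ℝ) - 2| ∧
    f₂ (-1) ≤ f₁ (-1) ∧ f₁ 1 < f₂ 1 := by
  refine ⟨by norm_num, by simp [f₁, f₂]; norm_num, by simp [f₁, f₂]; norm_num⟩
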